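/- arXiv:1306.0714 — 4 statements merged into one kernel-verified Lean document; each statement's English description precedes it below -/
import Mathlib

section
/- If P is a complex polynomial of degree exactly n ≥ 1 all of whose zeros lie in |z| ≤ 1, then for every R > 1 and every z with |z| = 1, one has |P(Rz)| ≥ ((R + 1)/2)ⁿ · |P(z)|. -/
open Polynomial Real

/-- The `ℬₙ`-operator with parameters `l0, l1, l2`:
`B[P](z) = λ₀·P(z) + λ₁·(nz/2)·P′(z) + (λ₂/2)·(nz/2)²·P″(z)`. -/
noncomputable def Bop (n : ℕ) (l0 l1 l2 : ℂ) (P : Polynomial ℂ) : Polynomial ℂ :=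
  Polynomial.C l0 * P
    + Polynomial.C (l1 * ((n : ℂ) / 2)) * (Polynomial.X * derivative P)
    + Polynomial.C (l2 / 2 * ((n : ℂ) / 2) ^ 2)
        * (Polynomial.X ^ 2 * derivative (derivative P))

/-- Every zero of `U(z) = λ₀ + λ₁·n·z + λ₂·(n(n−1)/2)·z²` lies in the
half-plane `|z| ≤ |z − n/2|`. -/
def AdmissibleParams (n : ℕ) (l0 l1 l2 : ℂ) : Prop :=
  ∀ z : ℂ, l0 + l1 * (n : ℂ) * z + l2 * ((n : ℂ) * ((n : ℂ) - 1) / 2) * z ^ 2 = 0 →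
    ‖z‖ ≤ ‖z - (n : ℂ) / 2‖

/-- `Λₙ = λ₀ + λ₁·n²/2 + λ₂·n³(n−1)/8`. -/
noncomputable def Lam (n : ℕ) (l0 l1 l2 : ℂ) : ℂ :=
  l0 + l1 * (n : ℂ) ^ 2 / 2 + l2 * (n : ℂ) ^ 3 * ((n : ℂ) - 1) / 8

/-- The polynomial `z ↦ P(Rz)`, i.e. `P ∘ σ` with `σ(z) = Rz`. -/
noncomputable def dilate (R : ℝ) (P : Polynomial ℂ) : Polynomial ℂ :=
  P.comp (Polynomial.C (R : ℂ) * Polynomial.X)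

/-- `‖f‖_p = ((1/2π) ∫₀^{2π} |f(e^{iθ})|^p dθ)^{1/p}`. -/
noncomputable def circNorm (p : ℝ) (f : ℂ → ℂ) : ℝ :=
  ((2 * π)⁻¹ * ∫ θ in (0:ℝ)..(2 * π),
      ‖f (Complex.exp (θ * Complex.I))‖ ^ p) ^ (1 / p)

/-- `min_{|z|=1} |f(z)|`. -/
noncomputable def minModulus (f : ℂ → ℂ) : ℝ :=
  sInf ((fun z => ‖f z‖) '' {z : ℂ | ‖z‖ = 1})

/-- `max_{|z|=1} |f(z)|`. -/
noncomputable def maxModulus (f : ℂ → ℂ) : ℝ :=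
  sSup ((fun z => ‖f z‖) '' {z : ℂ | ‖z‖ = 1})

/-- The conjugate-reciprocal polynomial `Q*(z) = zⁿ·conj(Q(1/conj z))`,
whose `j`-th coefficient is the conjugate of the `(n−j)`-th coefficient of `Q`. -/
noncomputable def conjRecip (n : ℕ) (Q : Polynomial ℂ) : Polynomial ℂ :=
  (Q.map (starRingEnd ℂ)).reflect n

/-!
Factor `P` over its roots. For `‖w‖ ≤ ‖z‖` one has
`R z - w = ((R + 1) / 2) (z - w) + ((R - 1) / 2) (z + w)` with
`⟪z - w, z + w⟫ = ‖z‖² - ‖w‖² ≥ 0`, so each linear factor `z - w` grows at least by the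
factor `(R + 1) / 2` when `z` is replaced by `R z`.
-/

theorem add_one_div_two_mul_norm_sub_le_norm_smul_sub {F : Type*} [NormedAddCommGroup F]
    [InnerProductSpace ℝ F] {R : ℝ} (hR : 1 ≤ R) {z w : F} (hwz : ‖w‖ ≤ ‖z‖) :
    (R + 1) / 2 * ‖z - w‖ ≤ ‖R • z - w‖ := by
  have hdecomp : R • z - w = ((R + 1) / 2) • (z - w) + ((R - 1) / 2) • (z + w) := by module
  have hinner : 0 ≤ inner ℝ (z - w) (z + w) := by
    rw [inner_sub_left, inner_add_right, inner_add_right, real_inner_comm w z,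
      real_inner_self_eq_norm_sq, real_inner_self_eq_norm_sq]
    linarith [pow_le_pow_left₀ (norm_nonneg w) hwz 2]
  have hcross : 0 ≤ inner ℝ (((R + 1) / 2) • (z - w)) (((R - 1) / 2) • (z + w)) := by
    rw [real_inner_smul_left, real_inner_smul_right]
    exact mul_nonneg (by linarith) (mul_nonneg (by linarith) hinner)
  have hsq : ‖((R + 1) / 2) • (z - w)‖ ^ 2 ≤ ‖R • z - w‖ ^ 2 := by
    rw [hdecomp, norm_add_sq_real]
    linarith [sq_nonneg ‖((R - 1) / 2) • (z + w)‖]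
  rw [norm_smul, Real.norm_of_nonneg (by linarith)] at hsq
  exact (pow_le_pow_iff_left₀ (by positivity) (norm_nonneg _) two_ne_zero).mp hsq

theorem Polynomial.Splits.pow_natDegree_mul_norm_eval_le {K : Type*} [NormedField K]
    {P : K[X]} (hP : P.Splits) {c : ℝ} (hc : 0 ≤ c) {x y : K}
    (hroots : ∀ w ∈ P.roots, c * ‖x - w‖ ≤ ‖y - w‖) :
    c ^ P.natDegree * ‖P.eval x‖ ≤ ‖P.eval y‖ := by
  have hnorm (u : K) : ‖P.eval u‖ = ‖P.leadingCoeff‖ * (P.roots.map (‖u - ·‖)).prod := by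
    rw [hP.eval_eq_prod_roots, norm_mul, ← normHom_apply (_ : Multiset K).prod,
      map_multiset_prod, Multiset.map_map]
    rfl
  rw [hnorm, hnorm, mul_left_comm, hP.natDegree_eq_card_roots, ← Multiset.prod_replicate,
    ← Multiset.map_const', ← Multiset.prod_map_mul]
  gcongr
  exact Multiset.prod_map_le_prod_map₀ _ _ (fun w _ => by positivity) hroots

theorem growth_of_polynomial_with_zeros_in_disk_general
    (n : ℕ) (P : Polynomial ℂ) (hdeg : P.degree = (n : ℕ))
    (hP : ∀ z : ℂ, P.IsRoot z → ‖z‖ ≤ 1)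
    (R : ℝ) (hR : 1 < R) (z : ℂ) (hz : ‖z‖ = 1) :
    ((R + 1) / 2) ^ n * ‖P.eval z‖
      ≤ ‖P.eval ((R : ℂ) * z)‖ := by
  rw [← natDegree_eq_of_degree_eq_some hdeg]
  refine (IsAlgClosed.splits P).pow_natDegree_mul_norm_eval_le (by positivity) fun w hw => ?_
  rw [← Complex.real_smul]
  exact add_one_div_two_mul_norm_sub_le_norm_smul_sub hR.le (hz ▸ hP w (isRoot_of_mem_roots hw))

/-- Lemma 2 of the paper. -/
theorem growth_of_polynomial_with_zeros_in_disk
    (n : ℕ) (hn : 1 ≤ n) (P : Polynomial ℂ) (hdeg : P.degree = (n : ℕ))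
    (hP : ∀ z : ℂ, P.IsRoot z → ‖z‖ ≤ 1)
    (R : ℝ) (hR : 1 < R) (z : ℂ) (hz : ‖z‖ = 1) :
    ((R + 1) / 2) ^ n * ‖P.eval z‖
      ≤ ‖P.eval ((R : ℂ) * z)‖ :=
  growth_of_polynomial_with_zeros_in_disk_general n P hdeg hP R hR z hz
end

section
/- If A, B, C are non-negative real numbers such that B + C ≤ A, then for each real number γ one has |(A − C)·e^{iγ} + (B + C)| ≤ |A·e^{iγ} + B|, where the absolute values are moduli of complex numbers. -/
/-!
For a unit complex number `z` and real `x, y` one has `‖x z + y‖² = x² + y² + 2xy Re z`.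
Moving `c` from the coefficient of `z` to the real part therefore lowers the squared modulus
by exactly `2c (x - y - c)(1 - Re z)`, which is nonnegative when `0 ≤ c`, `y + c ≤ x`
and `Re z ≤ 1`.
-/

namespace Complex

theorem normSq_ofReal_mul_add_ofReal {z : ℂ} (hz : ‖z‖ = 1) (x y : ℝ) :
    normSq (x * z + y) = x ^ 2 + y ^ 2 + 2 * x * y * z.re := by
  have hre_im : 1 - z.re ^ 2 = z.im ^ 2 := by
    simpa only [hz, one_pow] using sq_norm_sub_sq_re z
  simp only [normSq_apply, add_re, add_im, mul_re, mul_im, ofReal_re, ofReal_im]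
  linear_combination -x ^ 2 * hre_im

theorem norm_ofReal_sub_mul_add_ofReal_add_le {z : ℂ} (hz : ‖z‖ = 1) {x y c : ℝ}
    (hc : 0 ≤ c) (h : y + c ≤ x) :
    ‖((x - c : ℝ) : ℂ) * z + ((y + c : ℝ) : ℂ)‖ ≤ ‖(x : ℂ) * z + (y : ℂ)‖ := by
  have hre : z.re ≤ 1 := hz ▸ re_le_norm z
  rw [norm_def, norm_def, normSq_ofReal_mul_add_ofReal hz, normSq_ofReal_mul_add_ofReal hz]
  apply Real.sqrt_le_sqrt
  have hdrop : 0 ≤ 2 * c * (x - y - c) * (1 - z.re) :=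
    mul_nonneg (mul_nonneg (by positivity) (by linarith)) (sub_nonneg.mpr hre)
  linear_combination hdrop

end Complex

theorem rotation_modulus_inequality_general
    (A B C : ℝ) (hC : 0 ≤ C) (h : B + C ≤ A) (γ : ℝ) :
    ‖((A - C : ℝ) : ℂ) * Complex.exp (γ * Complex.I) + ((B + C : ℝ) : ℂ)‖
      ≤ ‖(A : ℂ) * Complex.exp (γ * Complex.I) + (B : ℂ)‖ :=
  Complex.norm_ofReal_sub_mul_add_ofReal_add_le (Complex.norm_exp_ofReal_mul_I γ) hC h

/-- Lemma 7 of the paper, on complex moduli. -/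
theorem rotation_modulus_inequality
    (A B C : ℝ) (hA : 0 ≤ A) (hB : 0 ≤ B) (hC : 0 ≤ C) (h : B + C ≤ A) (γ : ℝ) :
    ‖((A - C : ℝ) : ℂ) * Complex.exp (γ * Complex.I) + ((B + C : ℝ) : ℂ)‖
      ≤ ‖(A : ℂ) * Complex.exp (γ * Complex.I) + (B : ℂ)‖ :=
  rotation_modulus_inequality_general A B C hC h γ
end

section
/- Let n ≥ 1, let λ₀, λ₁, λ₂ be complex numbers such that every zero of U(z) = λ₀ + λ₁·n·z + λ₂·(n(n−1)/2)·z² lies in the half-plane |z| ≤ |z − n/2|, and let B be the associated operator of the class ℬ_n. If P is a complex polynomial of degree at most n with no zero in |z| < 1, then for every complex number α with |α| ≤ 1, every R > 1, and every z with |z| < 1, one has the strict inequality | B[P∘σ](z) − α·B[P](z) | < | B[P*∘σ]*(z) − conj(α)·B[P*]*(z) |, where B[P*∘σ]*(z) := (B[P*∘σ](z))* and B[P*]*(z) := (B[P*](z))*. -/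
/-!
Write `U(u) = λ₀ + λ₁ n u + λ₂ (n(n-1)/2) u²`; the hypothesis says `U(n t / 2) ≠ 0` whenever
`|t - 1| < |t|`. If `Q` has degree `n` and zeros `w₁, …, wₙ` with `|wₖ| ≤ ρ < |z|`, then
`B[Q](z) = Q(z) Φ(t₁, …, tₙ)` with `tₖ = z / (z - wₖ)`, where `Φ = λ₀ + λ₁ (n/2) e₁ + λ₂ (n/2)² e₂`
has diagonal `t ↦ U(n t / 2)`. The `tₖ` lie in a closed disk inside `|t - 1| < |t|`, so by the
Grace–Walsh–Szegő coincidence theorem (proved here in degree two from Laguerre's theorem on polar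
derivatives) `B[Q](z) ≠ 0`. Applied to `Q = W ∘ σ - α W`, whose zeros lie in the open unit disk
when those of `W` lie in the closed one, this shows `B[W ∘ σ - α W] ≠ 0` on `|z| ≥ 1`.

Since `P` has no zeros in the open disk, `|P| ≤ |P*|` outside it. If
`|B[P ∘ σ - α P](ζ)| > |B[P* ∘ σ - α P*](ζ)|` at some `|ζ| = 1`, then `W = P - δ P*`, with `δ` the
ratio of the two values, contradicts the previous paragraph. So on the unit circle
`|B[P ∘ σ - α P]| ≤ |B[P* ∘ σ - α P*]| = |B[P* ∘ σ - α P*]*|`; the right-hand side has no zeros in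
the closed disk, and the inequality is strict at the origin because `|λ₀| ≤ |Λₙ|` and
`|1 - α| < |Rⁿ - α|`. The maximum modulus principle then gives the strict inequality in the disk.
-/

open Polynomial Real

open Metric ComplexConjugate

namespace Multiset

variable {R : Type*} [CommSemiring R]

lemma esymm_cons_succ (a : R) (s : Multiset R) (k : ℕ) :
    (a ::ₘ s).esymm (k + 1) = s.esymm (k + 1) + a * s.esymm k := by
  simp only [esymm, powersetCard_cons, map_add, sum_add, map_map, Function.comp_def, prod_cons,
    sum_map_mul_left]

lemma esymm_zero (s : Multiset R) : s.esymm 0 = 1 := by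
  simp [esymm]

lemma esymm_one (s : Multiset R) : s.esymm 1 = s.sum := by
  simp [esymm, powersetCard_one, map_map]

lemma prod_map_lt_prod_map_of_nonneg {ι : Type*} {s : Multiset ι} (hs : s ≠ 0) {f g : ι → ℝ}
    (hf : ∀ i ∈ s, 0 ≤ f i) (hfg : ∀ i ∈ s, f i < g i) : (s.map f).prod < (s.map g).prod := by
  by_cases hpos : ∀ i ∈ s, 0 < f i
  · exact prod_map_lt_prod_map hs f g hpos hfg
  · push Not at hpos
    obtain ⟨i, hi, hfi⟩ := hpos
    have hzero : (s.map f).prod = 0 :=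
      prod_eq_zero (mem_map.mpr ⟨i, hi, le_antisymm hfi (hf i hi)⟩)
    rw [hzero]
    exact prod_pos fun x hx ↦ by
      obtain ⟨j, hj, rfl⟩ := mem_map.mp hx
      exact (hf j hj).trans_lt (hfg j hj)

lemma sum_div_card_mem_closedBall {s : Multiset ℂ} (hs : s ≠ 0) {c : ℂ} {ρ : ℝ}
    (h : ∀ t ∈ s, t ∈ closedBall c ρ) : s.sum / card s ∈ closedBall c ρ := by
  have hcard : (0 : ℝ) < card s := by exact_mod_cast card_pos.mpr hs
  have hsum : s.sum / card s - c = (s.map (· - c)).sum / card s := by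
    have hcard' : (card s : ℂ) ≠ 0 := by exact_mod_cast hcard.ne'
    rw [sum_map_sub, map_id', map_const', sum_replicate, nsmul_eq_mul]
    field_simp
  rw [mem_closedBall, dist_eq_norm, hsum, norm_div, Complex.norm_natCast,
    div_le_iff₀ hcard, mul_comm]
  calc ‖(s.map (· - c)).sum‖ ≤ ((s.map (· - c)).map norm).sum := norm_multiset_sum_le _
    _ ≤ card s • ρ := by
        rw [map_map, ← card_map (norm ∘ (· - c)) s]
        refine sum_le_card_nsmul _ _ fun x hx ↦ ?_
        obtain ⟨t, ht, rfl⟩ := mem_map.mp hx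
        simpa [dist_eq_norm] using h t ht
    _ = card s * ρ := nsmul_eq_mul _ _

lemma card_mul_sub_sum_ne_zero {s : Multiset ℂ} (hs : s ≠ 0) {c τ : ℂ} {ρ : ℝ}
    (h : ∀ t ∈ s, t ∈ closedBall c ρ) (hτ : τ ∉ closedBall c ρ) : card s * τ - s.sum ≠ 0 := by
  intro h0
  have hcard : (card s : ℂ) ≠ 0 := by exact_mod_cast (card_pos.mpr hs).ne'
  refine hτ ?_
  convert sum_div_card_mem_closedBall hs h using 1
  field_simp
  linear_combination h0

lemma exists_pos_lt_forall_norm_le {M : Multiset ℂ} {r : ℝ} (hr : 0 < r)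
    (h : ∀ w ∈ M, ‖w‖ < r) : ∃ ρ, 0 < ρ ∧ ρ < r ∧ ∀ w ∈ M, ‖w‖ ≤ ρ := by
  classical
  set S := insert (r / 2) (M.toFinset.image norm)
  refine ⟨S.max' (Finset.insert_nonempty _ _), ?_, ?_, fun w hw ↦ ?_⟩
  · exact (half_pos hr).trans_le (S.le_max' _ (Finset.mem_insert_self _ _))
  · refine (S.max'_lt_iff _).mpr fun y hy ↦ ?_
    rcases Finset.mem_insert.mp hy with rfl | hy
    · exact half_lt_self hr
    · obtain ⟨w, hw, rfl⟩ := Finset.mem_image.mp hy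
      exact h w (mem_toFinset.mp hw)
  · exact S.le_max' _
      (Finset.mem_insert_of_mem (Finset.mem_image_of_mem _ (mem_toFinset.mpr hw)))

end Multiset

namespace Complex

lemma norm_le_norm_iff_normSq_le {a b : ℂ} : ‖a‖ ≤ ‖b‖ ↔ normSq a ≤ normSq b := by
  rw [← sq_le_sq₀ (norm_nonneg a) (norm_nonneg b), Complex.sq_norm, Complex.sq_norm]

lemma norm_lt_norm_iff_normSq_lt {a b : ℂ} : ‖a‖ < ‖b‖ ↔ normSq a < normSq b := by
  rw [← sq_lt_sq₀ (norm_nonneg a) (norm_nonneg b), Complex.sq_norm, Complex.sq_norm]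

lemma norm_sub_lt_norm_ofReal_mul_sub {R : ℝ} (hR : 1 < R) {v z : ℂ} (hv : ‖v‖ ≤ 1)
    (hz : 1 ≤ ‖z‖) : ‖z - v‖ < ‖(R : ℂ) * z - v‖ := by
  have key : normSq ((R : ℂ) * z - v) - normSq (z - v)
      = (R ^ 2 - 1) * normSq z - 2 * (R - 1) * (z * conj v).re := by
    simp only [normSq_apply, sub_re, sub_im, mul_re, mul_im, ofReal_re, ofReal_im, conj_re,
      conj_im]
    ring
  have hre : (z * conj v).re ≤ ‖z‖ :=
    calc (z * conj v).re ≤ ‖z * conj v‖ := re_le_norm _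
      _ = ‖z‖ * ‖v‖ := by rw [norm_mul, norm_conj]
      _ ≤ ‖z‖ := mul_le_of_le_one_right (norm_nonneg z) hv
  have hz2 : ‖z‖ ≤ normSq z := by
    rw [normSq_eq_norm_sq]; nlinarith
  rw [norm_lt_norm_iff_normSq_lt]
  nlinarith [mul_le_mul_of_nonneg_left (hre.trans hz2) (by linarith : (0 : ℝ) ≤ 2 * (R - 1)),
    mul_pos (pow_pos (sub_pos.mpr hR) 2) (by linarith : (0 : ℝ) < normSq z)]

lemma norm_sub_le_norm_one_sub_conj_mul {z w : ℂ} (hz : 1 ≤ ‖z‖) (hw : 1 ≤ ‖w‖) :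
    ‖z - w‖ ≤ ‖1 - conj z * w‖ := by
  have key : normSq (1 - conj z * w) - normSq (z - w) = (normSq z - 1) * (normSq w - 1) := by
    simp only [normSq_apply, sub_re, sub_im, mul_re, mul_im, one_re, one_im, conj_re, conj_im]
    ring
  have hz2 : 1 ≤ normSq z := by rw [normSq_eq_norm_sq]; nlinarith
  have hw2 : 1 ≤ normSq w := by rw [normSq_eq_norm_sq]; nlinarith
  rw [norm_le_norm_iff_normSq_le]
  nlinarith

lemma inv_sub_mem_closedBall_iff {x c t : ℂ} {ρ : ℝ} (hρ : 0 ≤ ρ) (hx : ρ < ‖x - c‖)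
    (ht : t ≠ x) :
    (x - t)⁻¹ ∈ closedBall (conj (x - c) / (‖x - c‖ ^ 2 - ρ ^ 2 : ℝ)) (ρ / (‖x - c‖ ^ 2 - ρ ^ 2))
      ↔ t ∈ closedBall c ρ := by
  set K := ‖x - c‖ ^ 2 - ρ ^ 2 with hKdef
  have hK : 0 < K := by nlinarith
  have hu : 0 < ‖x - t‖ := norm_pos_iff.mpr (sub_ne_zero.mpr ht.symm)
  have hsplit : (x - t)⁻¹ - conj (x - c) / K = (K - conj (x - c) * (x - t)) / (K * (x - t)) := by
    have : (K : ℂ) ≠ 0 := ofReal_ne_zero.mpr hK.ne'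
    field_simp [sub_ne_zero.mpr ht.symm]
  -- `u ↦ u⁻¹` maps the disk `‖u - (x - c)‖ ≤ ρ` onto the disk of the statement
  have key : normSq (K - conj (x - c) * (x - t)) - ρ ^ 2 * normSq (x - t)
      = K * (normSq (c - t) - ρ ^ 2) := by
    rw [hKdef, ← normSq_eq_norm_sq]
    simp only [normSq_apply, sub_re, sub_im, mul_re, mul_im, conj_re, conj_im, ofReal_re,
      ofReal_im]
    ring
  rw [mem_closedBall, mem_closedBall, dist_eq_norm, dist_eq_norm, hsplit, norm_div, norm_mul,
    norm_real, Real.norm_of_nonneg hK.le, div_le_div_iff₀ (by positivity) hK,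
    show ρ * (K * ‖x - t‖) = ρ * ‖x - t‖ * K by ring, mul_le_mul_iff_of_pos_right hK,
    ← norm_sub_rev c, ← sq_le_sq₀ (norm_nonneg _) (by positivity), ← sq_le_sq₀ (norm_nonneg _) hρ,
    mul_pow, Complex.sq_norm, Complex.sq_norm, Complex.sq_norm]
  constructor <;> intro h <;> nlinarith

lemma mem_closedBall_of_sum_inv_sub_eq {c x τ : ℂ} {ρ : ℝ} (hρ : 0 ≤ ρ)
    (hx : x ∉ closedBall c ρ) {M : Multiset ℂ} (hM0 : M ≠ 0) (hM : ∀ t ∈ M, t ∈ closedBall c ρ)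
    (hsum : (M.map fun t ↦ (x - t)⁻¹).sum = Multiset.card M * (x - τ)⁻¹) :
    τ ∈ closedBall c ρ := by
  rw [mem_closedBall, dist_eq_norm, not_le] at hx
  have hne : ∀ t ∈ closedBall c ρ, t ≠ x := fun t ht htx ↦ by
    rw [mem_closedBall, dist_eq_norm, htx] at ht
    linarith
  have hmean := Multiset.sum_div_card_mem_closedBall (mt Multiset.map_eq_zero.mp hM0)
    fun u hu ↦ by
      obtain ⟨t, ht, rfl⟩ := Multiset.mem_map.mp hu
      exact (inv_sub_mem_closedBall_iff hρ hx (hne t (hM t ht))).mpr (hM t ht)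
  have hcard : (Multiset.card M : ℂ) ≠ 0 := by exact_mod_cast (Multiset.card_pos.mpr hM0).ne'
  rw [Multiset.card_map, hsum, mul_div_cancel_left₀ _ hcard] at hmean
  by_cases hτ : τ = x
  · have hK : 0 < ‖x - c‖ ^ 2 - ρ ^ 2 := by nlinarith
    rw [hτ, sub_self, inv_zero, mem_closedBall, dist_eq_norm, zero_sub, norm_neg, norm_div,
      norm_conj, norm_real, Real.norm_of_nonneg hK.le, div_le_div_iff_of_pos_right hK] at hmean
    linarith
  · exact (inv_sub_mem_closedBall_iff hρ hx hτ).mp hmean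

lemma mem_closedBall_iff_mul_norm_sub_one_le {s : ℝ} (hs : 1 < s) (t : ℂ) :
    t ∈ closedBall ((s ^ 2 / (s ^ 2 - 1) : ℝ) : ℂ) (s / (s ^ 2 - 1)) ↔ s * ‖t - 1‖ ≤ ‖t‖ := by
  have hs₁ : 0 < s ^ 2 - 1 := by nlinarith
  have key : s ^ 2 * normSq (t - 1) - normSq t
      = (s ^ 2 - 1) * (normSq (t - ((s ^ 2 / (s ^ 2 - 1) : ℝ) : ℂ)) - (s / (s ^ 2 - 1)) ^ 2) := by
    simp only [normSq_apply, sub_re, sub_im, one_re, one_im, ofReal_re, ofReal_im]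
    field_simp
    ring
  rw [mem_closedBall, dist_eq_norm, ← sq_le_sq₀ (norm_nonneg _) (by positivity),
    ← sq_le_sq₀ (by positivity) (norm_nonneg _), mul_pow, Complex.sq_norm, Complex.sq_norm,
    Complex.sq_norm]
  constructor <;> intro h <;> nlinarith

end Complex

namespace Polynomial

lemma coeff_X_mul_derivative {R : Type*} [CommSemiring R] (p : R[X]) (k : ℕ) :
    (X * derivative p).coeff k = k * p.coeff k := by
  cases k with
  | zero => simp
  | succ k => rw [coeff_X_mul, coeff_derivative, mul_comm]; push_cast; ring

lemma coeff_X_sq_mul_derivative_derivative {R : Type*} [CommRing R] (p : R[X]) (k : ℕ) :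
    (X ^ 2 * derivative (derivative p)).coeff k = k * (k - 1) * p.coeff k := by
  rcases k with _ | _ | k
  · simp
  · simp [coeff_X_pow_mul']
  · rw [coeff_X_pow_mul, coeff_derivative, coeff_derivative]
    push_cast
    ring

variable {K : Type*} [Field K]

lemma eval_derivative_multiset_prod_X_sub_C {M : Multiset K} {z : K} (hz : ∀ t ∈ M, z ≠ t) :
    (derivative (M.map fun t ↦ X - C t).prod).eval z
      = (M.map fun t ↦ X - C t).prod.eval z * (M.map fun t ↦ (z - t)⁻¹).sum := by
  induction M using Multiset.induction_on with
  | empty => simp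
  | cons a M ih =>
    have ha : z - a ≠ 0 := sub_ne_zero.mpr (hz a (Multiset.mem_cons_self a M))
    simp only [Multiset.map_cons, Multiset.prod_cons, Multiset.sum_cons, derivative_mul,
      derivative_sub, derivative_X, derivative_C, sub_zero, one_mul, eval_add, eval_mul, eval_sub,
      eval_X, eval_C, ih fun t ht ↦ hz t (Multiset.mem_cons_of_mem ht)]
    field_simp

lemma eval_derivative_derivative_multiset_prod_X_sub_C {M : Multiset K} {z : K}
    (hz : ∀ t ∈ M, z ≠ t) :
    (derivative (derivative (M.map fun t ↦ X - C t).prod)).eval z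
      = 2 * (M.map fun t ↦ X - C t).prod.eval z * (M.map fun t ↦ (z - t)⁻¹).esymm 2 := by
  induction M using Multiset.induction_on with
  | empty => simp [Multiset.esymm, Multiset.powersetCard_zero_right]
  | cons a M ih =>
    have ha : z - a ≠ 0 := sub_ne_zero.mpr (hz a (Multiset.mem_cons_self a M))
    have hM : ∀ t ∈ M, z ≠ t := fun t ht ↦ hz t (Multiset.mem_cons_of_mem ht)
    simp only [Multiset.map_cons, Multiset.prod_cons, derivative_mul, derivative_sub,
      derivative_X, derivative_C, sub_zero, one_mul, derivative_add, eval_add, eval_mul, eval_sub,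
      eval_X, eval_C, ih hM, eval_derivative_multiset_prod_X_sub_C hM, Multiset.esymm_cons_succ,
      Multiset.esymm_one]
    field_simp
    ring

/-- Polar derivative of `f` with respect to `τ`; `n` stands for the degree of `f`. -/
noncomputable def polarDeriv (n : ℕ) (τ : K) (f : K[X]) : K[X] :=
  C (n : K) * f + (C τ - X) * derivative f

lemma coeff_polarDeriv (n : ℕ) (τ : K) (f : K[X]) (j : ℕ) :
    (polarDeriv n τ f).coeff j = (n - j) * f.coeff j + τ * (j + 1) * f.coeff (j + 1) := by
  simp only [polarDeriv, sub_mul, coeff_add, coeff_sub, coeff_C_mul, coeff_X_mul_derivative,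
    coeff_derivative]
  ring

lemma coeff_polarDeriv_eq_zero {n : ℕ} (τ : K) {f : K[X]} (hf : f.natDegree ≤ n) {j : ℕ}
    (hj : n ≤ j) : (polarDeriv n τ f).coeff j = 0 := by
  rw [coeff_polarDeriv, coeff_eq_zero_of_natDegree_lt (by omega : f.natDegree < j + 1)]
  rcases hj.eq_or_lt with rfl | hj
  · ring
  · rw [coeff_eq_zero_of_natDegree_lt (hf.trans_lt hj)]
    ring

section prodXSubC

variable {M : Multiset K} {m : ℕ} (hM : Multiset.card M = m + 2) (τ : K)
include hM

lemma coeff_polarDeriv_prod_X_sub_C_succ :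
    (polarDeriv (m + 2) τ (M.map fun t ↦ X - C t).prod).coeff (m + 1)
      = (m + 2) * τ - M.esymm 1 := by
  rw [coeff_polarDeriv, Multiset.prod_X_sub_C_coeff M (by omega),
    Multiset.prod_X_sub_C_coeff M (by omega), hM,
    show m + 2 - (m + 1) = 1 by omega, show m + 2 - (m + 1 + 1) = 0 by omega, Multiset.esymm_zero]
  push_cast
  ring

lemma coeff_polarDeriv_prod_X_sub_C :
    (polarDeriv (m + 2) τ (M.map fun t ↦ X - C t).prod).coeff m
      = 2 * M.esymm 2 - (m + 1) * τ * M.esymm 1 := by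
  rw [coeff_polarDeriv, Multiset.prod_X_sub_C_coeff M (by omega),
    Multiset.prod_X_sub_C_coeff M (by omega), hM,
    show m + 2 - m = 2 by omega, show m + 2 - (m + 1) = 1 by omega]
  push_cast
  ring

end prodXSubC

/-- Laguerre's theorem. -/
lemma mem_closedBall_of_isRoot_polarDeriv {M : Multiset ℂ} (hM0 : M ≠ 0) {c : ℂ} {ρ : ℝ}
    (hρ : 0 ≤ ρ) (hM : ∀ t ∈ M, t ∈ closedBall c ρ) {τ : ℂ} (hτ : τ ∉ closedBall c ρ) {s : ℂ}
    (hs : (polarDeriv (Multiset.card M) τ (M.map fun t ↦ X - C t).prod).IsRoot s) :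
    s ∈ closedBall c ρ := by
  by_contra hsK
  have hst : ∀ t ∈ M, s ≠ t := fun t ht hst ↦ hsK (hst ▸ hM t ht)
  have hfs : (M.map fun t ↦ X - C t).prod.eval s ≠ 0 := by
    rw [eval_multiset_prod]
    refine Multiset.prod_ne_zero ?_
    simpa [sub_eq_zero, eq_comm] using fun h ↦ hst s h rfl
  have hcard : (Multiset.card M : ℂ) ≠ 0 := by exact_mod_cast (Multiset.card_pos.mpr hM0).ne'
  have hroot : (Multiset.card M : ℂ) + (τ - s) * (M.map fun t ↦ (s - t)⁻¹).sum = 0 := by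
    have := hs.eq_zero
    rw [polarDeriv, eval_add, eval_mul, eval_mul, eval_C, eval_sub, eval_C, eval_X,
      eval_derivative_multiset_prod_X_sub_C hst] at this
    exact (mul_eq_zero.mp (by linear_combination this)).resolve_left hfs
  have hsτ : s - τ ≠ 0 := by
    rintro h
    rw [sub_eq_zero.mp h, sub_self, zero_mul, add_zero] at hroot
    exact hcard hroot
  refine hτ (Complex.mem_closedBall_of_sum_inv_sub_eq hρ hsK hM0 hM ?_)
  rw [← div_eq_mul_inv, eq_div_iff hsτ]
  linear_combination -hroot

end Polynomial

lemma Complex.exists_quadratic_eq_mul_sub_mul_sub (a b c : ℂ) (hc : c ≠ 0) :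
    ∃ τ₁ τ₂ : ℂ, a = c * (τ₁ * τ₂) ∧ b = -(c * (τ₁ + τ₂)) := by
  obtain ⟨d, hd⟩ := IsAlgClosed.exists_pow_nat_eq (b ^ 2 - 4 * c * a) two_pos
  refine ⟨(-b + d) / (2 * c), (-b - d) / (2 * c), ?_, ?_⟩
  · field_simp
    linear_combination hd
  · field_simp
    ring

section Walsh

open Multiset

lemma add_mul_esymm_one_ne_zero {a b w : ℂ} {ρ : ℝ} {M : Multiset ℂ} (hM0 : M ≠ 0)
    (hM : ∀ t ∈ M, t ∈ closedBall w ρ) (hq : ∀ t ∈ closedBall w ρ, a + b * card M * t ≠ 0) :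
    a + b * M.esymm 1 ≠ 0 := by
  have hcard : (card M : ℂ) ≠ 0 := by exact_mod_cast (card_pos.mpr hM0).ne'
  refine fun h ↦ hq _ (sum_div_card_mem_closedBall hM0 hM) ?_
  rw [esymm_one] at h
  field_simp
  linear_combination h

/-- Let `τ₁, τ₂` be the zeros of the diagonal polynomial, with leading coefficient `c₂`. The polar
derivative of `∏ (X - t)` with respect to `τ₁` has leading coefficient `γ = n τ₁ - e₁`, degree
`n - 1` and zeros `s` in the disk (Laguerre), and `n (n - 1)` times the form equals
`c₂ γ ((n - 1) τ₂ - Σ s)`. Neither `γ` nor the last factor vanishes, as the centroid of points of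
the disk stays in the disk. -/
lemma add_mul_esymm_one_add_mul_esymm_two_ne_zero_of_two_le {n : ℕ} (hn : 2 ≤ n) {a b c w : ℂ}
    {ρ : ℝ} (hρ : 0 ≤ ρ) (hc : c ≠ 0)
    (hq : ∀ t ∈ closedBall w ρ, a + b * n * t + c * (n * (n - 1) / 2) * t ^ 2 ≠ 0)
    {M : Multiset ℂ} (hcard : card M = n) (hM : ∀ t ∈ M, t ∈ closedBall w ρ) :
    a + b * M.esymm 1 + c * M.esymm 2 ≠ 0 := by
  obtain ⟨m, rfl⟩ : ∃ m, n = m + 2 := ⟨n - 2, by omega⟩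
  have hM0 : M ≠ 0 := by rintro rfl; simp at hcard
  push_cast at hq
  have hc₂ : c * ((m + 2) * (m + 2 - 1) / 2) ≠ 0 := by
    rw [show ((m : ℂ) + 2) * (m + 2 - 1) / 2 = ((m + 2) * (m + 1) : ℕ) / 2 by push_cast; ring]
    have hpos : 0 < (m + 2) * (m + 1) := by positivity
    exact mul_ne_zero hc (div_ne_zero (by exact_mod_cast hpos.ne') two_ne_zero)
  obtain ⟨τ₁, τ₂, ha, hb⟩ := Complex.exists_quadratic_eq_mul_sub_mul_sub a (b * (m + 2)) _ hc₂
  have hτ : ∀ τ, (τ = τ₁ ∨ τ = τ₂) → τ ∉ closedBall w ρ := by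
    rintro τ hτ hτK
    refine hq τ hτK ?_
    rcases hτ with rfl | rfl <;> linear_combination ha + τ * hb
  set g := polarDeriv (m + 2) τ₁ (M.map fun t ↦ X - C t).prod
  have hg₁ := coeff_polarDeriv_prod_X_sub_C_succ hcard τ₁
  have hγ : (m + 2) * τ₁ - M.esymm 1 ≠ 0 := by
    simpa [hcard, esymm_one] using card_mul_sub_sum_ne_zero hM0 hM (hτ τ₁ (Or.inl rfl))
  have hgdeg : g.natDegree = m + 1 := by
    refine natDegree_eq_of_le_of_coeff_ne_zero (natDegree_le_iff_coeff_eq_zero.mpr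
      fun j hj ↦ coeff_polarDeriv_eq_zero τ₁ ?_ hj) (hg₁ ▸ hγ)
    rw [natDegree_multiset_prod_X_sub_C_eq_card, hcard]
  have hvieta : g.coeff m = -((m + 2) * τ₁ - M.esymm 1) * g.roots.sum := by
    have := (IsAlgClosed.splits g).nextCoeff_eq_neg_sum_roots_mul_leadingCoeff
    rwa [nextCoeff_of_natDegree_pos (by omega), leadingCoeff, hgdeg, hg₁, Nat.add_sub_cancel]
      at this
  have hroots : ∀ s ∈ g.roots, s ∈ closedBall w ρ := fun s hs ↦
    mem_closedBall_of_isRoot_polarDeriv hM0 hρ hM (hτ τ₁ (Or.inl rfl))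
      (hcard ▸ isRoot_of_mem_roots hs)
  have hN : (m + 1) * τ₂ - g.roots.sum ≠ 0 := by
    have hNcard : card g.roots = m + 1 := by rw [IsAlgClosed.card_roots_eq_natDegree, hgdeg]
    have hN0 : g.roots ≠ 0 := by rw [← card_pos, hNcard]; omega
    simpa [hNcard] using card_mul_sub_sum_ne_zero hN0 hroots (hτ τ₂ (Or.inr rfl))
  intro h
  apply mul_ne_zero (mul_ne_zero hc₂ hγ) hN
  linear_combination (m + 1) * (m + 2) * h - (m + 1) * (m + 2) * ha - (m + 1) * M.esymm 1 * hb
    + c * ((m + 2) * (m + 2 - 1) / 2) * (coeff_polarDeriv_prod_X_sub_C hcard τ₁ - hvieta)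

/-- The Grace–Walsh–Szegő coincidence theorem for symmetric forms of degree two. -/
theorem add_mul_esymm_one_add_mul_esymm_two_ne_zero {n : ℕ} (hn : 1 ≤ n) {a b c w : ℂ} {ρ : ℝ}
    (hρ : 0 ≤ ρ) (hq : ∀ t ∈ closedBall w ρ, a + b * n * t + c * (n * (n - 1) / 2) * t ^ 2 ≠ 0)
    {M : Multiset ℂ} (hcard : card M = n) (hM : ∀ t ∈ M, t ∈ closedBall w ρ) :
    a + b * M.esymm 1 + c * M.esymm 2 ≠ 0 := by
  by_cases hlin : c = 0 ∨ n = 1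
  · have hM0 : M ≠ 0 := by rintro rfl; simp at hcard; omega
    have hce : c * M.esymm 2 = 0 := by
      rcases hlin with rfl | rfl
      · exact zero_mul _
      · rw [esymm, powersetCard_eq_empty 2 (by omega), Multiset.map_zero, sum_zero, mul_zero]
    rw [hce, add_zero]
    refine add_mul_esymm_one_ne_zero hM0 hM fun t ht ↦ ?_
    rcases hlin with rfl | rfl <;> simpa [hcard] using hq t ht
  · push Not at hlin
    exact add_mul_esymm_one_add_mul_esymm_two_ne_zero_of_two_le (by omega) hρ hlin.1 hq hcard hM

end Walsh

section Bop

variable {n : ℕ} {l0 l1 l2 : ℂ}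

lemma coeff_Bop (Q : ℂ[X]) (k : ℕ) :
    (Bop n l0 l1 l2 Q).coeff k
      = (l0 + l1 * (n / 2) * k + l2 / 2 * (n / 2) ^ 2 * (k * (k - 1))) * Q.coeff k := by
  simp only [Bop, coeff_add, coeff_C_mul, coeff_X_mul_derivative,
    coeff_X_sq_mul_derivative_derivative]
  ring

lemma coeff_Bop_self (Q : ℂ[X]) : (Bop n l0 l1 l2 Q).coeff n = Lam n l0 l1 l2 * Q.coeff n := by
  rw [coeff_Bop, Lam]
  ring

lemma coeff_Bop_zero (Q : ℂ[X]) : (Bop n l0 l1 l2 Q).coeff 0 = l0 * Q.coeff 0 := by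
  simp [coeff_Bop]

lemma Bop_sub_C_mul (Q₁ Q₂ : ℂ[X]) (α : ℂ) :
    Bop n l0 l1 l2 (Q₁ - C α * Q₂) = Bop n l0 l1 l2 Q₁ - C α * Bop n l0 l1 l2 Q₂ := by
  ext k
  simp only [coeff_Bop, coeff_sub, coeff_C_mul]
  ring

lemma eval_Bop (Q : ℂ[X]) (z : ℂ) :
    (Bop n l0 l1 l2 Q).eval z = l0 * Q.eval z + l1 * (n / 2) * (z * (derivative Q).eval z)
      + l2 / 2 * (n / 2) ^ 2 * (z ^ 2 * (derivative (derivative Q)).eval z) := by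
  simp [Bop]

lemma natDegree_Bop_le {Q : ℂ[X]} (hQ : Q.natDegree ≤ n) : (Bop n l0 l1 l2 Q).natDegree ≤ n :=
  natDegree_le_iff_coeff_eq_zero.mpr fun k hk ↦ by
    rw [coeff_Bop, coeff_eq_zero_of_natDegree_lt (hQ.trans_lt hk), mul_zero]

end Bop

section dilate

lemma coeff_dilate (R : ℝ) (Q : ℂ[X]) (k : ℕ) : (dilate R Q).coeff k = (R : ℂ) ^ k * Q.coeff k := by
  rw [dilate, comp_C_mul_X_coeff, mul_comm]

lemma eval_dilate (R : ℝ) (Q : ℂ[X]) (z : ℂ) : (dilate R Q).eval z = Q.eval (R * z) := by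
  simp [dilate, eval_comp]

lemma dilate_sub_C_mul (R : ℝ) (Q₁ Q₂ : ℂ[X]) (δ : ℂ) :
    dilate R (Q₁ - C δ * Q₂) = dilate R Q₁ - C δ * dilate R Q₂ := by
  simp [dilate, sub_comp, mul_comp, C_comp]

lemma natDegree_dilate_le (R : ℝ) (Q : ℂ[X]) : (dilate R Q).natDegree ≤ Q.natDegree :=
  natDegree_le_iff_coeff_eq_zero.mpr fun k hk ↦ by
    rw [coeff_dilate, coeff_eq_zero_of_natDegree_lt hk, mul_zero]

end dilate

section conjRecip

variable (n : ℕ)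

lemma coeff_conjRecip (Q : ℂ[X]) {k : ℕ} (hk : k ≤ n) :
    (conjRecip n Q).coeff k = conj (Q.coeff (n - k)) := by
  rw [conjRecip, coeff_reflect, revAt_le hk, coeff_map]

lemma natDegree_conjRecip_le {Q : ℂ[X]} (hQ : Q.natDegree ≤ n) : (conjRecip n Q).natDegree ≤ n :=
  natDegree_le_iff_coeff_eq_zero.mpr fun k hk ↦ by
    rw [conjRecip, coeff_reflect, revAt_eq_self_of_lt hk, coeff_map,
      coeff_eq_zero_of_natDegree_lt (hQ.trans_lt hk), map_zero]

lemma conjRecip_sub_C_mul (Q₁ Q₂ : ℂ[X]) (α : ℂ) :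
    conjRecip n (Q₁ - C α * Q₂) = conjRecip n Q₁ - C (conj α) * conjRecip n Q₂ := by
  ext k
  simp only [conjRecip, coeff_reflect, coeff_sub, coeff_map, coeff_C_mul, map_sub, map_mul]

lemma eval_conjRecip {Q : ℂ[X]} (hQ : Q.natDegree ≤ n) {z : ℂ} (hz : z ≠ 0) :
    (conjRecip n Q).eval z = z ^ n * conj (Q.eval (conj z)⁻¹) := by
  rw [eval_eq_sum_range' (Nat.lt_succ_of_le (natDegree_conjRecip_le n hQ)),
    eval_eq_sum_range' (Nat.lt_succ_of_le hQ), map_sum, Finset.mul_sum, ← Finset.sum_range_reflect]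
  refine Finset.sum_congr rfl fun k hk ↦ ?_
  have hkn : k ≤ n := Nat.lt_succ_iff.mp (Finset.mem_range.mp hk)
  rw [Nat.succ_sub_one, coeff_conjRecip n Q (Nat.sub_le n k), Nat.sub_sub_self hkn, map_mul,
    map_pow, map_inv₀, Complex.conj_conj, inv_pow, ← Nat.sub_add_cancel hkn, pow_add,
    Nat.sub_add_cancel hkn]
  field_simp

lemma norm_eval_conjRecip_of_norm_eq_one {Q : ℂ[X]} (hQ : Q.natDegree ≤ n) {z : ℂ}
    (hz : ‖z‖ = 1) : ‖(conjRecip n Q).eval z‖ = ‖Q.eval z‖ := by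
  have hz0 : z ≠ 0 := norm_ne_zero_iff.mp (hz ▸ one_ne_zero)
  have hinv : (conj z)⁻¹ = z :=
    inv_eq_of_mul_eq_one_right (by rw [Complex.conj_mul', hz]; norm_num)
  rw [eval_conjRecip n hQ hz0, hinv, norm_mul, norm_pow, hz, one_pow, one_mul, Complex.norm_conj]

end conjRecip

section roots

lemma norm_eval_eq_norm_leadingCoeff_mul_prod (Q : ℂ[X]) (x : ℂ) :
    ‖Q.eval x‖ = ‖Q.leadingCoeff‖ * (Q.roots.map fun w ↦ ‖x - w‖).prod := by
  conv_lhs =>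
    rw [← C_leadingCoeff_mul_prod_multiset_X_sub_C (IsAlgClosed.card_roots_eq_natDegree (p := Q))]
  rw [eval_mul, eval_C, eval_multiset_prod, norm_mul, ← normHom_apply (Multiset.prod _),
    map_multiset_prod, Multiset.map_map, Multiset.map_map]
  simp

lemma norm_eval_le_norm_eval_of_forall_roots {Q : ℂ[X]} {x y : ℂ}
    (h : ∀ w ∈ Q.roots, ‖x - w‖ ≤ ‖y - w‖) : ‖Q.eval x‖ ≤ ‖Q.eval y‖ := by
  rw [norm_eval_eq_norm_leadingCoeff_mul_prod, norm_eval_eq_norm_leadingCoeff_mul_prod]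
  exact mul_le_mul_of_nonneg_left
    (Multiset.prod_map_le_prod_map₀ _ _ (fun _ _ ↦ norm_nonneg _) h) (norm_nonneg _)

lemma norm_eval_lt_norm_eval_of_forall_roots {Q : ℂ[X]} (hQ : 0 < Q.natDegree) {x y : ℂ}
    (h : ∀ w ∈ Q.roots, ‖x - w‖ < ‖y - w‖) : ‖Q.eval x‖ < ‖Q.eval y‖ := by
  have hQ0 : Q ≠ 0 := ne_zero_of_natDegree_gt hQ
  have hroots : Q.roots ≠ 0 := by
    rw [← Multiset.card_pos, IsAlgClosed.card_roots_eq_natDegree]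
    exact hQ
  rw [norm_eval_eq_norm_leadingCoeff_mul_prod, norm_eval_eq_norm_leadingCoeff_mul_prod]
  exact mul_lt_mul_of_pos_left
    (Multiset.prod_map_lt_prod_map_of_nonneg hroots (fun _ _ ↦ norm_nonneg _) h)
    (norm_pos_iff.mpr (leadingCoeff_ne_zero.mpr hQ0))

end roots

namespace AdmissibleParams

variable {n : ℕ} {l0 l1 l2 : ℂ}

lemma norm_le_norm_Lam (hB : AdmissibleParams n l0 l1 l2) : ‖l0‖ ≤ ‖Lam n l0 l1 l2‖ := by
  set U : ℂ[X] := C l0 + C (l1 * n) * X + C (l2 * (n * (n - 1) / 2)) * X ^ 2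
  have hU : ∀ z, U.eval z = l0 + l1 * n * z + l2 * (n * (n - 1) / 2) * z ^ 2 := fun z ↦ by
    simp [U]
  have hU₀ : U.eval 0 = l0 := by simp [hU]
  have hUΛ : U.eval ((n : ℂ) / 2) = Lam n l0 l1 l2 := by rw [hU, Lam]; ring
  rw [← hUΛ, ← hU₀]
  refine norm_eval_le_norm_eval_of_forall_roots fun w hw ↦ ?_
  rw [zero_sub, norm_neg, norm_sub_rev]
  exact hB w ((hU w).symm.trans (isRoot_of_mem_roots hw))

lemma Lam_ne_zero (hn : 1 ≤ n) (hB : AdmissibleParams n l0 l1 l2) : Lam n l0 l1 l2 ≠ 0 := by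
  intro h
  have := hB (n / 2) (by rw [← h, Lam]; ring)
  rw [sub_self, norm_zero, norm_le_zero_iff, div_eq_zero_iff, Nat.cast_eq_zero] at this
  norm_num at this
  omega

lemma ne_zero_of_norm_sub_one_lt (hn : 1 ≤ n) (hB : AdmissibleParams n l0 l1 l2) {t : ℂ}
    (ht : ‖t - 1‖ < ‖t‖) :
    l0 + l1 * (n / 2) * n * t + l2 * (n / 2) ^ 2 * (n * (n - 1) / 2) * t ^ 2 ≠ 0 := by
  intro h
  have hle := hB (n * t / 2) (by linear_combination h)
  have hn2 : (0 : ℝ) < n / 2 := by positivity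
  rw [show (n : ℂ) * t / 2 - n / 2 = (n / 2 : ℝ) * (t - 1) by push_cast; ring,
    show (n : ℂ) * t / 2 = (n / 2 : ℝ) * t by push_cast; ring, norm_mul, norm_mul,
    Complex.norm_real, Real.norm_of_nonneg hn2.le] at hle
  exact (mul_le_mul_iff_of_pos_left hn2).not.mpr ht.not_ge hle

end AdmissibleParams

variable {n : ℕ} {l0 l1 l2 : ℂ}

lemma eval_Bop_eq_eval_mul_esymm {Q : ℂ[X]} {z : ℂ} (hz : ∀ w ∈ Q.roots, z ≠ w) :
    (Bop n l0 l1 l2 Q).eval z = Q.eval z * (l0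
      + l1 * (n / 2) * (Q.roots.map (fun w ↦ z / (z - w))).esymm 1
      + l2 * (n / 2) ^ 2 * (Q.roots.map (fun w ↦ z / (z - w))).esymm 2) := by
  have hT : Q.roots.map (fun w ↦ z / (z - w)) = (Q.roots.map fun w ↦ (z - w)⁻¹).map (z • ·) := by
    rw [Multiset.map_map]
    rfl
  have hQ := C_leadingCoeff_mul_prod_multiset_X_sub_C (IsAlgClosed.card_roots_eq_natDegree (p := Q))
  rw [hT, ← Multiset.pow_smul_esymm, ← Multiset.pow_smul_esymm, Multiset.esymm_one, pow_one,
    smul_eq_mul, smul_eq_mul]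
  have hQz : Q.eval z = Q.leadingCoeff * (Q.roots.map fun w ↦ X - C w).prod.eval z := by
    conv_lhs => rw [← hQ]
    rw [eval_mul, eval_C]
  conv_lhs => rw [eval_Bop, ← hQ]
  simp only [hQz, derivative_C_mul, eval_mul, eval_C, eval_derivative_multiset_prod_X_sub_C hz,
    eval_derivative_derivative_multiset_prod_X_sub_C hz]
  ring

/-- By `eval_Bop_eq_eval_mul_esymm`, `B[Q](z) = Q(z) Φ(t₁, …, tₙ)` with `tₖ = z / (z - wₖ)` for the
zeros `wₖ` of `Q`; the `tₖ` lie in a disk where `|t - 1| < |t|`, on which the diagonal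
`t ↦ U(n t / 2)` of `Φ` has no zero. -/
theorem Bop_eval_ne_zero_of_forall_roots_norm_le (hn : 1 ≤ n) (hB : AdmissibleParams n l0 l1 l2)
    {Q : ℂ[X]} (hQ : Q.natDegree = n) {ρ : ℝ} (hρ : 0 < ρ) (hroots : ∀ w ∈ Q.roots, ‖w‖ ≤ ρ)
    {z : ℂ} (hz : ρ < ‖z‖) : (Bop n l0 l1 l2 Q).eval z ≠ 0 := by
  have hzw : ∀ w ∈ Q.roots, z ≠ w := fun w hw h ↦ (hroots w hw).not_gt (h ▸ hz)
  set s := ‖z‖ / ρ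
  have hs : 1 < s := (one_lt_div hρ).mpr hz
  have hTK : ∀ t ∈ Q.roots.map (fun w ↦ z / (z - w)),
      t ∈ closedBall ((s ^ 2 / (s ^ 2 - 1) : ℝ) : ℂ) (s / (s ^ 2 - 1)) := by
    intro t ht
    obtain ⟨w, hw, rfl⟩ := Multiset.mem_map.mp ht
    have hzw' : z - w ≠ 0 := sub_ne_zero.mpr (hzw w hw)
    rw [Complex.mem_closedBall_iff_mul_norm_sub_one_le hs,
      show z / (z - w) - 1 = w / (z - w) by field_simp; ring, norm_div, norm_div, ← mul_div_assoc,
      div_le_div_iff_of_pos_right (norm_pos_iff.mpr hzw'), div_mul_eq_mul_div, div_le_iff₀ hρ]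
    exact mul_le_mul_of_nonneg_left (hroots w hw) (norm_nonneg z)
  have hq : ∀ t ∈ closedBall ((s ^ 2 / (s ^ 2 - 1) : ℝ) : ℂ) (s / (s ^ 2 - 1)),
      l0 + l1 * (n / 2) * n * t + l2 * (n / 2) ^ 2 * (n * (n - 1) / 2) * t ^ 2 ≠ 0 := by
    intro t ht
    rw [Complex.mem_closedBall_iff_mul_norm_sub_one_le hs] at ht
    refine hB.ne_zero_of_norm_sub_one_lt hn ?_
    rcases eq_or_ne t 1 with rfl | ht1
    · simp
    · exact ((lt_mul_iff_one_lt_left (norm_pos_iff.mpr (sub_ne_zero.mpr ht1))).mpr hs).trans_le ht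
  have hQz : Q.eval z ≠ 0 := fun h ↦
    hzw z ((mem_roots (ne_zero_of_natDegree_gt (hQ ▸ hn))).mpr h) rfl
  rw [eval_Bop_eq_eval_mul_esymm hzw]
  refine mul_ne_zero hQz (add_mul_esymm_one_add_mul_esymm_two_ne_zero hn
    (div_pos (by linarith) (by nlinarith)).le hq ?_ hTK)
  rw [Multiset.card_map, IsAlgClosed.card_roots_eq_natDegree, hQ]

section dilateSub

variable {Q : ℂ[X]} {α : ℂ} {R : ℝ}

lemma natDegree_dilate_sub_C_mul (hn : 1 ≤ n) (hQ : Q.natDegree = n) (hα : ‖α‖ ≤ 1)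
    (hR : 1 < R) : (dilate R Q - C α * Q).natDegree = n := by
  have hRα : (R : ℂ) ^ n - α ≠ 0 := by
    refine sub_ne_zero.mpr fun h ↦ ?_
    rw [← h, ← Complex.ofReal_pow, Complex.norm_real, Real.norm_of_nonneg (by positivity)] at hα
    exact (one_lt_pow₀ hR (by omega)).not_ge hα
  refine natDegree_eq_of_le_of_coeff_ne_zero ?_ ?_
  · exact (natDegree_sub_le _ _).trans (max_le ((natDegree_dilate_le R Q).trans hQ.le)
      ((natDegree_C_mul_le _ _).trans hQ.le))
  · rw [coeff_sub, coeff_dilate, coeff_C_mul, ← sub_mul, ← hQ]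
    exact mul_ne_zero (hQ ▸ hRα) (leadingCoeff_ne_zero.mpr (ne_zero_of_natDegree_gt (hQ ▸ hn)))

lemma eval_dilate_sub_C_mul_ne_zero (hQ : 0 < Q.natDegree)
    (hroots : ∀ x : ℂ, 1 < ‖x‖ → Q.eval x ≠ 0) (hα : ‖α‖ ≤ 1) (hR : 1 < R) {v : ℂ}
    (hv : 1 ≤ ‖v‖) : (dilate R Q - C α * Q).eval v ≠ 0 := by
  have hlt : ‖Q.eval v‖ < ‖Q.eval (R * v)‖ := by
    refine norm_eval_lt_norm_eval_of_forall_roots hQ fun w hw ↦ ?_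
    refine Complex.norm_sub_lt_norm_ofReal_mul_sub hR (not_lt.mp fun hw' ↦ ?_) hv
    exact hroots w hw' (isRoot_of_mem_roots hw)
  rw [eval_sub, eval_mul, eval_C, eval_dilate, sub_ne_zero]
  intro h
  rw [h, norm_mul] at hlt
  exact hlt.not_ge (mul_le_of_le_one_left (norm_nonneg _) hα)

theorem Bop_dilate_sub_C_mul_eval_ne_zero (hn : 1 ≤ n) (hB : AdmissibleParams n l0 l1 l2)
    (hQ : Q.natDegree = n) (hroots : ∀ x : ℂ, 1 < ‖x‖ → Q.eval x ≠ 0) (hα : ‖α‖ ≤ 1)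
    (hR : 1 < R) {w : ℂ} (hw : 1 ≤ ‖w‖) :
    (Bop n l0 l1 l2 (dilate R Q - C α * Q)).eval w ≠ 0 := by
  have hY := natDegree_dilate_sub_C_mul hn hQ hα hR
  obtain ⟨ρ, hρ, hρ1, hρroots⟩ := Multiset.exists_pos_lt_forall_norm_le one_pos fun v hv ↦
    not_le.mp fun hv' ↦ eval_dilate_sub_C_mul_ne_zero (hQ ▸ hn) hroots hα hR hv'
      (isRoot_of_mem_roots hv)
  exact Bop_eval_ne_zero_of_forall_roots_norm_le hn hB hY hρ hρroots (hρ1.trans_le hw)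

end dilateSub

section conjRecipComparison

variable {P : ℂ[X]} (hdeg : P.natDegree ≤ n) (hP : ∀ z : ℂ, ‖z‖ < 1 → P.eval z ≠ 0)
include hP

lemma coeff_zero_ne_zero_of_forall_norm_lt_one : P.coeff 0 ≠ 0 := by
  rw [coeff_zero_eq_eval_zero]
  exact hP 0 (by simp)

lemma one_le_norm_of_mem_roots {v : ℂ} (hv : v ∈ P.roots) : 1 ≤ ‖v‖ :=
  not_lt.mp fun h ↦ hP v h (isRoot_of_mem_roots hv)

include hdeg

lemma natDegree_conjRecip_eq : (conjRecip n P).natDegree = n := by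
  refine natDegree_eq_of_le_of_coeff_ne_zero (natDegree_conjRecip_le n hdeg) ?_
  rw [coeff_conjRecip n P le_rfl, Nat.sub_self, _root_.map_ne_zero]
  exact coeff_zero_ne_zero_of_forall_norm_lt_one hP

lemma eval_conjRecip_ne_zero {x : ℂ} (hx : 1 < ‖x‖) : (conjRecip n P).eval x ≠ 0 := by
  have hx0 : x ≠ 0 := norm_pos_iff.mp (one_pos.trans hx)
  rw [eval_conjRecip n hdeg hx0]
  refine mul_ne_zero (pow_ne_zero n hx0) ((_root_.map_ne_zero _).mpr (hP _ ?_))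
  rw [norm_inv, Complex.norm_conj]
  exact inv_lt_one_of_one_lt₀ hx

lemma norm_coeff_le_norm_coeff_conjRecip : ‖P.coeff n‖ ≤ ‖(conjRecip n P).coeff n‖ := by
  rw [coeff_conjRecip n P le_rfl, Nat.sub_self, Complex.norm_conj]
  rcases hdeg.lt_or_eq with hlt | rfl
  · rw [coeff_eq_zero_of_natDegree_lt hlt, norm_zero]
    exact norm_nonneg _
  · rw [coeff_zero_eq_eval_zero, norm_eval_eq_norm_leadingCoeff_mul_prod]
    refine le_mul_of_one_le_right (norm_nonneg _) (Multiset.one_le_prod_map fun v hv ↦ ?_)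
    rw [zero_sub, norm_neg]
    exact one_le_norm_of_mem_roots hP hv

lemma norm_eval_le_norm_eval_conjRecip {x : ℂ} (hx : 1 ≤ ‖x‖) :
    ‖P.eval x‖ ≤ ‖(conjRecip n P).eval x‖ := by
  have hx0 : x ≠ 0 := norm_pos_iff.mp (one_pos.trans_le hx)
  have hfactor : ∀ v : ℂ, ‖x‖ * ‖(conj x)⁻¹ - v‖ = ‖1 - conj x * v‖ := fun v ↦ by
    rw [← Complex.norm_conj x, ← norm_mul, mul_sub,
      mul_inv_cancel₀ ((_root_.map_ne_zero _).mpr hx0)]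
  calc ‖P.eval x‖ = ‖P.leadingCoeff‖ * (P.roots.map fun v ↦ ‖x - v‖).prod :=
        norm_eval_eq_norm_leadingCoeff_mul_prod P x
    _ ≤ ‖P.leadingCoeff‖ * (P.roots.map fun v ↦ ‖x‖ * ‖(conj x)⁻¹ - v‖).prod := by
        refine mul_le_mul_of_nonneg_left (Multiset.prod_map_le_prod_map₀ _ _
          (fun _ _ ↦ norm_nonneg _) fun v hv ↦ ?_) (norm_nonneg _)
        rw [hfactor]
        exact Complex.norm_sub_le_norm_one_sub_conj_mul hx (one_le_norm_of_mem_roots hP hv)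
    _ = ‖x‖ ^ P.natDegree * ‖P.eval (conj x)⁻¹‖ := by
        rw [Multiset.prod_map_mul, Multiset.map_const', Multiset.prod_replicate,
          IsAlgClosed.card_roots_eq_natDegree, norm_eval_eq_norm_leadingCoeff_mul_prod]
        ring
    _ ≤ ‖x‖ ^ n * ‖P.eval (conj x)⁻¹‖ := by gcongr
    _ = ‖(conjRecip n P).eval x‖ := by
        rw [eval_conjRecip n hdeg hx0, norm_mul, norm_pow, Complex.norm_conj]

end conjRecipComparison

/-- If `‖B[P ∘ σ - α P](ζ)‖ > ‖B[S ∘ σ - α S](ζ)‖`, then for `δ` the ratio of the two values,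
`W = P - δ S` has degree `n` and no zeros outside the closed unit disk, while
`B[W ∘ σ - α W](ζ) = 0`. -/
theorem norm_Bop_dilate_sub_C_mul_le (hn : 1 ≤ n) (hB : AdmissibleParams n l0 l1 l2)
    {P S : ℂ[X]} (hP : P.natDegree ≤ n) (hS : S.natDegree = n)
    (hSroots : ∀ x : ℂ, 1 < ‖x‖ → S.eval x ≠ 0)
    (hPS : ∀ x : ℂ, 1 < ‖x‖ → ‖P.eval x‖ ≤ ‖S.eval x‖) (hcoeff : ‖P.coeff n‖ ≤ ‖S.coeff n‖)
    {α : ℂ} (hα : ‖α‖ ≤ 1) {R : ℝ} (hR : 1 < R) {ζ : ℂ} (hζ : 1 ≤ ‖ζ‖) :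
    ‖(Bop n l0 l1 l2 (dilate R P - C α * P)).eval ζ‖
      ≤ ‖(Bop n l0 l1 l2 (dilate R S - C α * S)).eval ζ‖ := by
  set b := (Bop n l0 l1 l2 (dilate R S - C α * S)).eval ζ
  have hb : b ≠ 0 := Bop_dilate_sub_C_mul_eval_ne_zero hn hB hS hSroots hα hR hζ
  by_contra! hgt
  set δ := (Bop n l0 l1 l2 (dilate R P - C α * P)).eval ζ / b
  have hδ : 1 < ‖δ‖ := by rwa [norm_div, one_lt_div (norm_pos_iff.mpr hb)]
  have hsub : ∀ p s : ℂ, ‖p‖ ≤ ‖s‖ → s ≠ 0 → p - δ * s ≠ 0 := fun p s hps hs h ↦ by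
    rw [sub_eq_zero.mp h, norm_mul] at hps
    exact hps.not_gt (lt_mul_of_one_lt_left (norm_pos_iff.mpr hs) hδ)
  have hWdeg : (P - C δ * S).natDegree = n := by
    refine natDegree_eq_of_le_of_coeff_ne_zero ((natDegree_sub_le _ _).trans
      (max_le hP ((natDegree_C_mul_le _ _).trans hS.le))) ?_
    rw [coeff_sub, coeff_C_mul]
    exact hsub _ _ hcoeff (hS ▸ leadingCoeff_ne_zero.mpr (ne_zero_of_natDegree_gt (hS ▸ hn)))
  have hWroots : ∀ x : ℂ, 1 < ‖x‖ → (P - C δ * S).eval x ≠ 0 := fun x hx ↦ by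
    rw [eval_sub, eval_mul, eval_C]
    exact hsub _ _ (hPS x hx) (hSroots x hx)
  refine Bop_dilate_sub_C_mul_eval_ne_zero hn hB hWdeg hWroots hα hR hζ ?_
  rw [dilate_sub_C_mul, show ∀ p q : ℂ[X], p - C δ * q - C α * (P - C δ * S) = p - C α * P
    - C δ * (q - C α * S) from fun p q ↦ by ring, Bop_sub_C_mul, eval_sub, eval_mul, eval_C]
  exact sub_eq_zero.mpr (div_mul_cancel₀ _ hb).symm

lemma Complex.norm_lt_one_of_norm_le_one_on_sphere {f : ℂ → ℂ}
    (hf : DiffContOnCl ℂ f (ball 0 1)) (hbd : ∀ ζ ∈ sphere (0 : ℂ) 1, ‖f ζ‖ ≤ 1)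
    (h0 : ‖f 0‖ < 1) {z : ℂ} (hz : z ∈ ball (0 : ℂ) 1) : ‖f z‖ < 1 := by
  have hle : ∀ w ∈ closedBall (0 : ℂ) 1, ‖f w‖ ≤ 1 := fun w hw ↦
    norm_le_of_forall_mem_frontier_norm_le isBounded_ball hf
      (by rwa [frontier_ball _ one_ne_zero]) (by rwa [closure_ball _ one_ne_zero])
  refine (hle z (ball_subset_closedBall hz)).lt_of_ne fun heq ↦ h0.ne ?_
  have hmax : IsMaxOn (norm ∘ f) (ball 0 1) z := fun w hw ↦ by
    simpa [heq] using hle w (ball_subset_closedBall hw)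
  rw [eq_const_of_exists_max hf.differentiableOn hz hmax (mem_ball_self one_pos)]
  exact heq

lemma norm_eval_lt_norm_eval_of_norm_lt_one {A D : ℂ[X]}
    (hD : ∀ ζ : ℂ, ‖ζ‖ ≤ 1 → D.eval ζ ≠ 0)
    (hcirc : ∀ ζ : ℂ, ‖ζ‖ = 1 → ‖A.eval ζ‖ ≤ ‖D.eval ζ‖) (h0 : ‖A.eval 0‖ < ‖D.eval 0‖) {z : ℂ}
    (hz : ‖z‖ < 1) : ‖A.eval z‖ < ‖D.eval z‖ := by
  have hD' : ∀ ζ ∈ closedBall (0 : ℂ) 1, D.eval ζ ≠ 0 := fun ζ hζ ↦ hD ζ (by simpa using hζ)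
  have hf : DiffContOnCl ℂ (fun ζ ↦ A.eval ζ / D.eval ζ) (ball 0 1) :=
    ⟨A.differentiable.differentiableOn.div D.differentiable.differentiableOn
      fun ζ hζ ↦ hD' ζ (ball_subset_closedBall hζ),
     by rw [closure_ball _ one_ne_zero]
        exact A.continuous.continuousOn.div D.continuous.continuousOn hD'⟩
  have key := Complex.norm_lt_one_of_norm_le_one_on_sphere hf (fun ζ hζ ↦ ?_) ?_
    (mem_ball_zero_iff.mpr hz)
  · rwa [norm_div, div_lt_one (norm_pos_iff.mpr (hD z hz.le))] at key
  · rw [norm_div, div_le_one (norm_pos_iff.mpr (hD ζ (by simp [mem_sphere_zero_iff_norm.mp hζ])))]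
    exact hcirc ζ (mem_sphere_zero_iff_norm.mp hζ)
  · rwa [norm_div, div_lt_one (norm_pos_iff.mpr (hD 0 (by simp)))]

lemma eval_conjRecip_ne_zero_of_norm_le_one {Q : ℂ[X]} (hQ : Q.natDegree ≤ n)
    (hQroots : ∀ w : ℂ, 1 ≤ ‖w‖ → Q.eval w ≠ 0) (h0 : (conjRecip n Q).eval 0 ≠ 0) {ζ : ℂ}
    (hζ : ‖ζ‖ ≤ 1) : (conjRecip n Q).eval ζ ≠ 0 := by
  rcases eq_or_ne ζ 0 with rfl | hζ0
  · exact h0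
  rw [eval_conjRecip n hQ hζ0]
  refine mul_ne_zero (pow_ne_zero n hζ0) ((_root_.map_ne_zero _).mpr (hQroots _ ?_))
  rw [norm_inv, Complex.norm_conj]
  exact one_le_inv₀ (norm_pos_iff.mpr hζ0) |>.mpr hζ

lemma norm_eval_zero_Bop_lt (hn : 1 ≤ n) (hB : AdmissibleParams n l0 l1 l2) {P : ℂ[X]}
    (hP0 : P.coeff 0 ≠ 0) {α : ℂ} (hα : ‖α‖ ≤ 1) {R : ℝ} (hR : 1 < R) :
    ‖(Bop n l0 l1 l2 (dilate R P - C α * P)).eval 0‖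
      < ‖(conjRecip n (Bop n l0 l1 l2
          (dilate R (conjRecip n P) - C α * conjRecip n P))).eval 0‖ := by
  have hRα : ‖1 - α‖ < ‖((R ^ n : ℝ) : ℂ) - α‖ := by
    simpa using Complex.norm_sub_lt_norm_ofReal_mul_sub (one_lt_pow₀ hR (by omega)) hα
      (z := 1) (by simp)
  rw [← coeff_zero_eq_eval_zero, ← coeff_zero_eq_eval_zero, coeff_Bop_zero,
    coeff_conjRecip n _ (Nat.zero_le n), Nat.sub_zero, coeff_Bop_self, coeff_sub, coeff_sub,
    coeff_dilate, coeff_dilate, coeff_C_mul, coeff_C_mul, coeff_conjRecip n P le_rfl, Nat.sub_self,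
    pow_zero, ← sub_mul, ← sub_mul, Complex.norm_conj, norm_mul, norm_mul, norm_mul, norm_mul,
    Complex.norm_conj, ← mul_assoc, ← mul_assoc, ← Complex.ofReal_pow]
  exact mul_lt_mul_of_pos_right (mul_lt_mul' hB.norm_le_norm_Lam hRα (norm_nonneg _)
    (norm_pos_iff.mpr (hB.Lam_ne_zero hn))) (norm_pos_iff.mpr hP0)

/-- strict inequality inside the unit disk. -/
theorem Bn_strict_inequality_in_disk
    (n : ℕ) (hn : 1 ≤ n) (l0 l1 l2 : ℂ) (hB : AdmissibleParams n l0 l1 l2)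
    (P : Polynomial ℂ) (hdeg : P.degree ≤ n)
    (hP : ∀ z : ℂ, ‖z‖ < 1 → P.eval z ≠ 0)
    (α : ℂ) (hα : ‖α‖ ≤ 1) (R : ℝ) (hR : 1 < R)
    (z : ℂ) (hz : ‖z‖ < 1) :
    ‖(Bop n l0 l1 l2 (dilate R P)).eval z
        - α * (Bop n l0 l1 l2 P).eval z‖
      < ‖(conjRecip n (Bop n l0 l1 l2 (dilate R (conjRecip n P)))).eval z
          - (starRingEnd ℂ) α * (conjRecip n (Bop n l0 l1 l2 (conjRecip n P))).eval z‖ := by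
  have hPdeg : P.natDegree ≤ n := natDegree_le_iff_degree_le.mpr hdeg
  have hS := natDegree_conjRecip_eq hPdeg hP
  have hSroots := fun x ↦ eval_conjRecip_ne_zero hPdeg hP (x := x)
  have h0 := norm_eval_zero_Bop_lt hn hB (coeff_zero_ne_zero_of_forall_norm_lt_one hP) hα hR
    (l1 := l1) (l2 := l2)
  have hcirc : ∀ ζ : ℂ, ‖ζ‖ = 1 → _ := fun ζ hζ ↦
    (norm_Bop_dilate_sub_C_mul_le hn hB hPdeg hS hSroots
      (fun x hx ↦ norm_eval_le_norm_eval_conjRecip hPdeg hP hx.le)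
      (norm_coeff_le_norm_coeff_conjRecip hPdeg hP) hα hR hζ.ge).trans_eq
    (norm_eval_conjRecip_of_norm_eq_one n (natDegree_Bop_le
      (natDegree_dilate_sub_C_mul hn hS hα hR).le) hζ).symm
  have hD := fun ζ (hζ : ‖ζ‖ ≤ 1) ↦ eval_conjRecip_ne_zero_of_norm_le_one
    (natDegree_Bop_le (natDegree_dilate_sub_C_mul hn hS hα hR).le)
    (fun w hw ↦ Bop_dilate_sub_C_mul_eval_ne_zero hn hB hS hSroots hα hR hw)
    (norm_pos_iff.mp ((norm_nonneg _).trans_lt h0)) hζ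
  have key := norm_eval_lt_norm_eval_of_norm_lt_one hD hcirc h0 hz
  rwa [Bop_sub_C_mul, Bop_sub_C_mul, conjRecip_sub_C_mul, eval_sub, eval_sub, eval_mul, eval_mul,
    eval_C, eval_C] at key
end

section
/- If Q is a complex polynomial of degree exactly n ≥ 1 all of whose zeros lie in |z| ≤ 1, then for every complex number α with |α| ≤ 1 and every R > 1, all the zeros of the polynomial z ↦ Q(Rz) − α·Q(z) lie in |z| < 1. -/
/-!
Factor `Q = c ∏ (X - r)` over its roots. If `‖z‖ ≥ 1 ≥ ‖r‖`, then moving `z` outward to `R z`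
strictly increases its distance to each root `r`, so `‖Q (R z)‖ > ‖Q z‖ ≥ ‖α Q z‖`, and `z` is not
a zero of `Q (R z) - α Q z`.
-/

open Polynomial

theorem norm_sub_lt_norm_smul_sub {E : Type*} [NormedAddCommGroup E] [InnerProductSpace ℝ E]
    {w r : E} {R : ℝ} (hR : 1 < R) (hw : w ≠ 0) (hr : ‖r‖ ≤ ‖w‖) :
    ‖w - r‖ < ‖R • w - r‖ := by
  have hinner : inner ℝ w r ≤ ‖w‖ ^ 2 :=
    (real_inner_le_norm w r).trans (by nlinarith [norm_nonneg w, norm_nonneg r])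
  have hw' : 0 < ‖w‖ := norm_pos_iff.2 hw
  refine lt_of_pow_lt_pow_left₀ 2 (norm_nonneg _) ?_
  rw [norm_sub_sq_real, norm_sub_sq_real, norm_smul, real_inner_smul_left, Real.norm_eq_abs,
    abs_of_pos (by linarith)]
  -- the difference of the two sides is `(R - 1) * ((R + 1) * ‖w‖ ^ 2 - 2 * ⟪w, r⟫)`
  nlinarith [mul_pos (sub_pos.2 hR) (mul_pos (sub_pos.2 hR) (pow_pos hw' 2)),
    mul_le_mul_of_nonneg_left hinner (sub_pos.2 hR).le]

theorem Polynomial.norm_eval_eq_norm_leadingCoeff_mul_prod_roots {K : Type*} [NormedField K]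
    [IsAlgClosed K] (Q : K[X]) (w : K) :
    ‖Q.eval w‖ = ‖Q.leadingCoeff‖ * (Q.roots.map fun r => ‖w - r‖).prod := by
  rw [(IsAlgClosed.splits Q).eval_eq_prod_roots, norm_mul]
  congr 1
  exact (map_multiset_prod (normHom : K →*₀ ℝ) _).trans (by rw [Multiset.map_map]; rfl)

theorem Polynomial.norm_eval_lt_norm_eval_real_mul {Q : ℂ[X]} (hQ : 0 < Q.natDegree) {z : ℂ}
    (hz : z ≠ 0) (hroots : ∀ r ∈ Q.roots, ‖r‖ ≤ ‖z‖) {R : ℝ} (hR : 1 < R) :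
    ‖Q.eval z‖ < ‖Q.eval (R * z)‖ := by
  have hQ0 : Q ≠ 0 := ne_zero_of_natDegree_gt hQ
  have hRz : ‖z‖ < ‖(R : ℂ) * z‖ := by
    rw [norm_mul, Complex.norm_real, Real.norm_of_nonneg (by linarith)]
    exact lt_mul_left (norm_pos_iff.2 hz) hR
  rcases eq_or_ne (Q.eval z) 0 with hz0 | hz0
  · rw [hz0, norm_zero, norm_pos_iff]
    exact fun h => (hroots _ ((mem_roots hQ0).2 h)).not_gt hRz
  rw [norm_eval_eq_norm_leadingCoeff_mul_prod_roots, norm_eval_eq_norm_leadingCoeff_mul_prod_roots]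
  refine mul_lt_mul_of_pos_left (Multiset.prod_map_lt_prod_map ?_ _ _ ?_ ?_) ?_
  · rw [← Multiset.card_pos, splits_iff_card_roots.1 (IsAlgClosed.splits Q)]
    exact hQ
  · intro r hr
    exact norm_pos_iff.2 (sub_ne_zero.2 fun h => hz0 (h ▸ (mem_roots hQ0).1 hr))
  · intro r hr
    simpa [Complex.real_smul] using norm_sub_lt_norm_smul_sub hR hz (hroots r hr)
  · exact norm_pos_iff.2 (leadingCoeff_ne_zero.2 hQ0)

/-- if all zeros of `Q` (of degree exactly `n ≥ 1`) lie in the closed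
unit disk, then all zeros of `z ↦ Q(Rz) − α·Q(z)` lie in the open unit disk. -/
theorem zeros_of_dilated_difference
    (n : ℕ) (hn : 1 ≤ n) (Q : Polynomial ℂ) (hdeg : Q.degree = (n : ℕ))
    (hQ : ∀ z : ℂ, Q.IsRoot z → ‖z‖ ≤ 1)
    (α : ℂ) (hα : ‖α‖ ≤ 1) (R : ℝ) (hR : 1 < R) :
    ∀ z : ℂ, Q.eval ((R : ℂ) * z) - α * Q.eval z = 0 → ‖z‖ < 1 := by
  intro z hzero
  by_contra! hz
  have hnatDeg : 0 < Q.natDegree := by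
    rw [natDegree_eq_of_degree_eq_some hdeg]
    exact hn
  have hlt := norm_eval_lt_norm_eval_real_mul hnatDeg (norm_pos_iff.1 (by linarith))
    (fun r hr => (hQ r (isRoot_of_mem_roots hr)).trans hz) hR
  have hle : ‖Q.eval ((R : ℂ) * z)‖ ≤ ‖Q.eval z‖ := by
    rw [eq_of_sub_eq_zero hzero, norm_mul]
    exact mul_le_of_le_one_left (norm_nonneg _) hα
  exact hle.not_gt hlt
end
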